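/- For C = {x ∈ ℝ² | 0 ≤ x₁ ≤ 2, 0 ≤ x₂ ≤ 1 + √(1 − (x₁ − 1)²)}, the point v = (0,1) belongs to es(C) but v ∉ argmax_{u ∈ C} ⟨u, w⟩ for every w with σ_C(w) > 0. -/

import Mathlib

/-!
Near `v = (0, 1)` the upper boundary of `C` is the arc `x₂ = 1 + √(x₁ (2 - x₁))`, which leaves `v`
with a vertical tangent. If `v` maximised `⟨·, w⟩` with `w₁ > 0`, comparing with the arc point
of abscissa `ε` would give `√ε · w₁ ≤ ε · (-w₀)` for all small `ε > 0`, which fails as `ε → 0`.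
Hence a maximiser `v` forces `σ_C(w) = ⟨v, w⟩ = w₁ ≤ 0`.
-/

open Set Metric Filter Topology
open scoped RealInnerProductSpace

/-- The set C = {x ∈ ℝ² | 0 ≤ x₁ ≤ 2, 0 ≤ x₂ ≤ 1 + √(1 − (x₁ − 1)²)}. -/
def Cex17 : Set (EuclideanSpace ℝ (Fin 2)) :=
  {p | 0 ≤ p 0 ∧ p 0 ≤ 2 ∧ 0 ≤ p 1 ∧ p 1 ≤ 1 + Real.sqrt (1 - (p 0 - 1) ^ 2)}

/-- The point v = (0,1). -/
noncomputable def vex17 : EuclideanSpace ℝ (Fin 2) :=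
  (WithLp.equiv 2 (Fin 2 → ℝ)).symm ![0, 1]

lemma EuclideanSpace.inner_fin_two (u w : EuclideanSpace ℝ (Fin 2)) :
    ⟪u, w⟫ = u 0 * w 0 + u 1 * w 1 := by
  simp [PiLp.inner_apply, Fin.sum_univ_two, mul_comm]

lemma Real.nonpos_of_forall_sqrt_mul_le {a b : ℝ} (h : ∀ ε ∈ Ioc (0 : ℝ) 1, √ε * b ≤ ε * a) :
    b ≤ 0 := by
  by_contra! hb
  have hba : b ≤ a := by simpa using h 1 ⟨one_pos, le_rfl⟩
  have ha : 0 < a := hb.trans_le hba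
  -- `ε = c²` with `c = b / 2a` makes the right side `c · b / 2`, half the left side.
  set c := b / (2 * a)
  have hc : 0 < c := by positivity
  have hc1 : c ≤ 1 := by rw [div_le_one (by positivity)]; linarith
  have hcb : c * b ≤ c ^ 2 * a := by
    simpa [Real.sqrt_sq hc.le] using h (c ^ 2) ⟨by positivity, pow_le_one₀ hc.le hc1⟩
  have hca : c * a = b / 2 := by simp only [c]; field_simp
  nlinarith

lemma Real.sqrt_le_sqrt_one_sub_sq_sub_one {ε : ℝ} (hε0 : 0 ≤ ε) (hε1 : ε ≤ 1) :
    √ε ≤ √(1 - (ε - 1) ^ 2) :=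
  Real.sqrt_le_sqrt (by nlinarith)

lemma vex17_mem_Cex17 : vex17 ∈ Cex17 := by
  norm_num [Cex17, vex17]

lemma smul_vex17_notMem_Cex17 {t : ℝ} (ht : 1 < t) : t • vex17 ∉ Cex17 := by
  rintro ⟨-, -, -, h⟩
  norm_num [vex17] at h
  linarith

lemma arc_point_mem_Cex17 {ε : ℝ} (h0 : 0 ≤ ε) (h2 : ε ≤ 2) :
    !₂[ε, 1 + √(1 - (ε - 1) ^ 2)] ∈ Cex17 :=
  ⟨h0, h2, add_nonneg zero_le_one (Real.sqrt_nonneg _), le_rfl⟩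

lemma nonpos_of_isMaxOn_vex17 {w : EuclideanSpace ℝ (Fin 2)}
    (hmax : IsMaxOn (fun u => ⟪u, w⟫) Cex17 vex17) : w 1 ≤ 0 := by
  by_contra! hw
  refine hw.not_ge (Real.nonpos_of_forall_sqrt_mul_le (a := -w 0) fun ε ⟨hε0, hε1⟩ => ?_)
  have harc := isMaxOn_iff.1 hmax _ (arc_point_mem_Cex17 hε0.le (by linarith))
  simp only [EuclideanSpace.inner_fin_two] at harc
  have hsqrt := Real.sqrt_le_sqrt_one_sub_sq_sub_one hε0.le hε1
  norm_num [vex17] at harc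
  nlinarith

/-- v = (0,1) belongs to the end set of Cex17 but to no argmax set of a direction
with positive support value. -/
theorem end_set_point_not_in_S :
    vex17 ∈ {x ∈ Cex17 | ∀ t : ℝ, 1 < t → t • x ∉ Cex17} ∧
    ∀ w : EuclideanSpace ℝ (Fin 2), 0 < sSup ((fun u => ⟪u, w⟫) '' Cex17) →
      vex17 ∉ {u ∈ Cex17 | ∀ u' ∈ Cex17, ⟪u', w⟫ ≤ ⟪u, w⟫} := by
  refine ⟨⟨vex17_mem_Cex17, fun t => smul_vex17_notMem_Cex17⟩, ?_⟩
  rintro w hw ⟨-, hmax⟩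
  have hsup : sSup ((fun u => ⟪u, w⟫) '' Cex17) = ⟪vex17, w⟫ :=
    IsGreatest.csSup_eq ⟨mem_image_of_mem _ vex17_mem_Cex17, forall_mem_image.2 hmax⟩
  have hv : ⟪vex17, w⟫ = w 1 := by simp [EuclideanSpace.inner_fin_two, vex17]
  linarith [nonpos_of_isMaxOn_vex17 (isMaxOn_iff.2 hmax)]
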